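/- arXiv:math/0505091 — 3 statements merged into one kernel-verified Lean document; each statement's English description precedes it below -/
import Mathlib

section
/- Let η₀, η_t : ℤ → {0,1} be configurations with exactly one tagged particle trajectory, where the tagged particle starts at the origin (η₀(0) = 1) and particles preserve their relative order (no crossings). Let X_t be the position of the tagged particle at time t and J_{−1,0}(t) the net current across the bond (−1,0). Then for every positive integer n, X_t ≥ n if and only if J_{−1,0}(t) ≥ ∑_{x=0}^{n−1} η_t(x). -/
open Real Finset

lemma up_lemma {m : ℕ} (p : Fin m → Prop) [DecidablePred p]
    (hp : ∀ i j : Fin m, p i → i ≤ j → p j) (i₀ : Fin m) :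
    p i₀ ↔ (univ.filter (fun i => i₀ ≤ i)).card ≤ (univ.filter p).card := by
  constructor
  · intro h
    apply card_le_card
    intro j hj
    simp only [mem_filter, mem_univ, true_and] at *
    exact hp i₀ j h hj
  · intro h
    by_contra hni
    have hsub : univ.filter p ⊆ univ.filter (fun i => i₀ < i) := by
      intro j hj
      simp only [mem_filter, mem_univ, true_and] at *
      rcases lt_or_ge i₀ j with h' | h'
      · exact h'
      · exact absurd (hp j i₀ hj h') hni
    have h1 : (univ.filter (fun i : Fin m => i₀ < i)).card
        < (univ.filter (fun i : Fin m => i₀ ≤ i)).card := by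
      apply card_lt_card
      constructor
      · intro j hj
        simp only [mem_filter, mem_univ, true_and] at *
        exact hj.le
      · intro hcon
        have := hcon (by simp : i₀ ∈ univ.filter (fun i => i₀ ≤ i))
        simp at this
    have h2 := card_le_card hsub
    omega

/-- Key identity for the tagged particle: finitely many ordered (non-crossing)
particles on `ℤ`, with positions `pos` at time `0` and `post` at time `t`,
tagged particle `i₀` starting at the origin, and current
`J_{-1,0}(t) = #{particles ≥ 0 at time t} - #{particles ≥ 0 at time 0}`.
Then for every `n ≥ 1`: `X_t ≥ n ↔ J_{-1,0}(t) ≥ ∑_{x=0}^{n-1} η_t(x)`. -/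
theorem stmt_12 (m : ℕ) (pos post : Fin m → ℤ)
    (hpos : StrictMono pos) (hpost : StrictMono post)
    (i₀ : Fin m) (htag : pos i₀ = 0)
    (J : ℤ)
    (hJ : J = ((univ.filter (fun i => 0 ≤ post i)).card : ℤ)
            - ((univ.filter (fun i => 0 ≤ pos i)).card : ℤ)) :
    ∀ n : ℕ, 1 ≤ n →
      ((n : ℤ) ≤ post i₀ ↔
        ((univ.filter (fun i => 0 ≤ post i ∧ post i ≤ (n : ℤ) - 1)).card : ℤ) ≤ J) := by
  intro n hn
  have hA : (univ.filter (fun i => 0 ≤ pos i)) = univ.filter (fun i => i₀ ≤ i) := by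
    apply filter_congr
    intro i _
    simp [← htag, hpos.le_iff_le]
  have hBCD : (univ.filter (fun i => 0 ≤ post i)).card
      = (univ.filter (fun i => 0 ≤ post i ∧ post i ≤ (n : ℤ) - 1)).card
        + (univ.filter (fun i => (n : ℤ) ≤ post i)).card := by
    rw [← card_union_of_disjoint]
    · congr 1
      ext i
      simp only [mem_union, mem_filter, mem_univ, true_and]
      omega
    · rw [disjoint_left]
      intro i hi hj
      simp only [mem_filter, mem_univ, true_and] at *
      omega
  have hmono : ∀ i j : Fin m, (n : ℤ) ≤ post i → i ≤ j → (n : ℤ) ≤ post j := by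
    intro i j hi hij
    exact le_trans hi (hpost.monotone hij)
  rw [up_lemma (fun i => (n : ℤ) ≤ post i) hmono i₀, hJ, hA, hBCD]
  push_cast
  omega
end

section
/- Let ρ solve the heat equation ∂_t ρ = ∂_x² ρ on ℝ with initial data ρ₀ : ℝ → [0,1] continuous with ρ bounded below by c > 0 on a neighborhood of the relevant trajectory. Then the implicit equation ∫₀^{u_t} ρ(t,w) dw = −∫₀^t ∂_x ρ(s,0) ds defines a unique continuously differentiable function t ↦ u_t with u_0 = 0, and u_t satisfies the ODE u̇_t = −∂_x ρ(t, u_t)/ρ(t, u_t). -/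
open Real MeasureTheory intervalIntegral
open Set ContDiff

set_option maxHeartbeats 1000000

/-- If `ρ` solves the heat equation with smooth initial data `ρ₀ : ℝ → [0,1]`
and `ρ ≥ c > 0` on `[0,T] × ℝ`, then the implicit equation
`∫₀^{u_t} ρ(t,w) dw = -∫₀^t ∂_x ρ(s,0) ds` defines a unique continuously
differentiable `t ↦ u_t` on `[0,T]` with `u_0 = 0`, and `u` satisfies the ODE
`u̇_t = -∂_x ρ(t,u_t) / ρ(t,u_t)`. -/
theorem stmt_13 (ρ₀ : ℝ → ℝ) (hρ₀ : ContDiff ℝ (⊤ : ℕ∞) ρ₀)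
    (hrange : ∀ x, ρ₀ x ∈ Set.Icc (0 : ℝ) 1)
    (ρ : ℝ → ℝ → ℝ)
    (hsmooth : ContDiff ℝ (⊤ : ℕ∞) (Function.uncurry ρ))
    (hinit : ∀ x, ρ 0 x = ρ₀ x)
    (heat : ∀ t x, deriv (fun τ => ρ τ x) t = iteratedDeriv 2 (ρ t) x)
    (T c : ℝ) (hT : 0 < T) (hc : 0 < c)
    (hlow : ∀ t x, t ∈ Set.Icc 0 T → c ≤ ρ t x) :
    ∃ u : ℝ → ℝ,
      u 0 = 0 ∧
      ContDiffOn ℝ 1 u (Set.Icc 0 T) ∧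
      (∀ t ∈ Set.Icc (0 : ℝ) T,
        ∫ w in (0 : ℝ)..(u t), ρ t w = -∫ s in (0 : ℝ)..t, deriv (ρ s) 0) ∧
      (∀ t ∈ Set.Icc (0 : ℝ) T,
        HasDerivAt u (-(deriv (ρ t) (u t)) / ρ t (u t)) t) ∧
      ∀ v : ℝ → ℝ,
        (∀ t ∈ Set.Icc (0 : ℝ) T,
          ∫ w in (0 : ℝ)..(v t), ρ t w = -∫ s in (0 : ℝ)..t, deriv (ρ s) 0) →
        ∀ t ∈ Set.Icc (0 : ℝ) T, v t = u t := by
  classical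
  -- basic continuity/smoothness facts
  have hρc : Continuous (Function.uncurry ρ) := hsmooth.continuous
  have hρtc : ∀ t, Continuous (ρ t) := fun t =>
    hρc.comp (continuous_const.prodMk continuous_id)
  have hρt_smooth : ∀ t, ContDiff ℝ (⊤ : ℕ∞) (ρ t) := fun t =>
    hsmooth.comp (contDiff_const.prodMk contDiff_id)
  -- partial derivatives
  set P : ℝ → ℝ → ℝ := fun t x => fderiv ℝ (Function.uncurry ρ) (t, x) (1, 0) with hPdef
  set Q : ℝ → ℝ → ℝ := fun t x => fderiv ℝ (Function.uncurry ρ) (t, x) (0, 1) with hQdef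
  have hP : ∀ t x, HasDerivAt (fun τ => ρ τ x) (P t x) t := by
    intro t x
    have h1 : HasFDerivAt (Function.uncurry ρ) (fderiv ℝ (Function.uncurry ρ) (t, x)) (t, x) :=
      (hsmooth.differentiable (by simp) _).hasFDerivAt
    have h2 : HasDerivAt (fun τ : ℝ => (τ, x)) ((1 : ℝ), (0 : ℝ)) t :=
      (hasDerivAt_id t).prodMk (hasDerivAt_const t x)
    exact h1.comp_hasDerivAt t h2
  have hQ : ∀ t x, HasDerivAt (ρ t) (Q t x) x := by
    intro t x
    have h1 : HasFDerivAt (Function.uncurry ρ) (fderiv ℝ (Function.uncurry ρ) (t, x)) (t, x) :=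
      (hsmooth.differentiable (by simp) _).hasFDerivAt
    have h2 : HasDerivAt (fun y : ℝ => (t, y)) ((0 : ℝ), (1 : ℝ)) x :=
      (hasDerivAt_const x t).prodMk (hasDerivAt_id x)
    exact h1.comp_hasDerivAt x h2
  have hQd : ∀ t x, deriv (ρ t) x = Q t x := fun t x => (hQ t x).deriv
  have hPc : Continuous fun p : ℝ × ℝ => P p.1 p.2 := by
    have := ((hsmooth.fderiv_right (m := 1) (WithTop.coe_le_coe.mpr le_top)).continuous).clm_apply
      (continuous_const (y := ((1:ℝ), (0:ℝ))))
    simpa [hPdef] using this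
  have hQc : Continuous fun p : ℝ × ℝ => Q p.1 p.2 := by
    have := ((hsmooth.fderiv_right (m := 1) (WithTop.coe_le_coe.mpr le_top)).continuous).clm_apply
      (continuous_const (y := ((0:ℝ), (1:ℝ))))
    simpa [hQdef] using this
  -- the boundary flux
  set D : ℝ → ℝ := fun s => deriv (ρ s) 0 with hDdef
  have hDc : Continuous D := by
    have : D = fun s => Q s 0 := funext fun s => hQd s 0
    rw [this]
    exact hQc.comp (continuous_id.prodMk continuous_const)
  set g : ℝ → ℝ := fun t => -∫ s in (0:ℝ)..t, D s with hgdef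
  set G : ℝ → ℝ → ℝ := fun t y => ∫ w in (0:ℝ)..y, ρ t w with hGdef
  have hGc : ∀ t, Continuous (G t) := fun t =>
    intervalIntegral.continuous_primitive (fun a b => ((hρtc t).intervalIntegrable a b)) 0
  have hGsub : ∀ t y z, ∫ w in y..z, ρ t w = G t z - G t y := fun t y z =>
    (integral_interval_sub_left ((hρtc t).intervalIntegrable 0 z)
      ((hρtc t).intervalIntegrable 0 y)).symm
  -- bound on the flux
  obtain ⟨C₀, hC₀⟩ := (isCompact_Icc (a := (-1:ℝ)) (b := T+1)).exists_bound_of_continuousOn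
    hDc.continuousOn
  set C : ℝ := max C₀ 0 with hCdef
  have hC0 : 0 ≤ C := le_max_right _ _
  have hC : ∀ s ∈ Icc (-1:ℝ) (T+1), |D s| ≤ C := fun s hs =>
    le_trans (hC₀ s hs) (le_max_left _ _)
  have hgb : ∀ t ∈ Icc (-1:ℝ) (T+1), |g t| ≤ C * (T+1) := by
    intro t ht
    have h1 : ∀ x ∈ Set.uIoc (0:ℝ) t, ‖D x‖ ≤ C := by
      intro x hx
      apply hC
      rcases Set.mem_uIoc.mp hx with h | h
      · exact ⟨by linarith [h.1], by linarith [h.2, ht.2]⟩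
      · exact ⟨by linarith [h.1, ht.1], by linarith [h.2, hT]⟩
    have h2 := intervalIntegral.norm_integral_le_of_norm_le_const h1
    have h3 : |t - 0| ≤ T + 1 := by
      rw [sub_zero, abs_le]; constructor <;> linarith [ht.1, ht.2]
    have : |g t| = ‖∫ s in (0:ℝ)..t, D s‖ := by rw [hgdef]; simp [Real.norm_eq_abs]
    rw [this]
    calc ‖∫ s in (0:ℝ)..t, D s‖ ≤ C * |t - 0| := h2
      _ ≤ C * (T+1) := by nlinarith
  -- the a priori bound M
  set M : ℝ := 2 * (C * (T+1)) / c + 1 with hMdef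
  have hM0 : 0 < M := by positivity
  have hMc : C * (T+1) < c/2 * M := by
    have : c/2 * M = C*(T+1) + c/2 := by rw [hMdef]; field_simp
    linarith
  -- positivity window
  have hKU : (Icc (0:ℝ) T ×ˢ Icc (-M) M : Set (ℝ × ℝ)) ⊆
      {p : ℝ × ℝ | c/2 < Function.uncurry ρ p} := by
    rintro ⟨t, y⟩ ⟨ht, _⟩
    have := hlow t y ht
    simp only [Set.mem_setOf_eq, Function.uncurry]
    linarith
  obtain ⟨δ₀, hδ₀, hthick⟩ := (isCompact_Icc.prod isCompact_Icc).exists_thickening_subset_open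
    (isOpen_lt continuous_const hρc) hKU
  set δ : ℝ := min (δ₀ / 2) 1 with hδdef
  have hδpos : 0 < δ := by
    apply lt_min; linarith; norm_num
  have hδ1 : δ ≤ 1 := min_le_right _ _
  have hδδ₀ : δ < δ₀ := lt_of_le_of_lt (min_le_left _ _) (by linarith)
  set W : Set ℝ := Icc (-δ) (T + δ) with hWdef
  have hWsub : W ⊆ Icc (-1:ℝ) (T+1) := Icc_subset_Icc (by linarith) (by linarith)
  have hIccW : Icc (0:ℝ) T ⊆ W := Icc_subset_Icc (by linarith) (by linarith)
  have hpos : ∀ t ∈ W, ∀ y ∈ Icc (-M) M, c/2 ≤ ρ t y := by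
    intro t ht y hy
    set t' : ℝ := max 0 (min t T) with ht'def
    have ht'mem : t' ∈ Icc (0:ℝ) T := by
      constructor
      · exact le_max_left _ _
      · rw [ht'def]; rcases le_total t T with h | h
        · simp [min_eq_left h]; exact ⟨hT.le, h⟩
        · simp [min_eq_right h]; exact hT.le
    have hdist : dist t t' < δ₀ := by
      rw [Real.dist_eq, abs_lt]
      rcases le_total t 0 with h | h
      · have : t' = 0 := by
          rw [ht'def, max_eq_left]; exact le_trans (min_le_left _ _) h
        rw [this]; constructor <;> [linarith [ht.1]; linarith]
      · rcases le_total t T with h2 | h2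
        · have : t' = t := by rw [ht'def, min_eq_left h2, max_eq_right h]
          rw [this]; constructor <;> linarith
        · have : t' = T := by rw [ht'def, min_eq_right h2, max_eq_right hT.le]
          rw [this]; constructor <;> [linarith; linarith [ht.2]]
    have hmem : ((t, y) : ℝ × ℝ) ∈ Metric.thickening δ₀ (Icc (0:ℝ) T ×ˢ Icc (-M) M) := by
      rw [Metric.mem_thickening_iff]
      refine ⟨(t', y), ⟨ht'mem, hy⟩, ?_⟩
      rw [Prod.dist_eq]
      simp only [dist_self]
      exact max_lt hdist hδ₀
    have := hthick hmem
    simp only [Set.mem_setOf_eq, Function.uncurry] at this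
    linarith
  -- monotonicity estimates
  have hmono2 : ∀ t ∈ W, ∀ y z, y ∈ Icc (-M) M → z ∈ Icc (-M) M → y ≤ z →
      c/2 * (z - y) ≤ ∫ w in y..z, ρ t w := by
    intro t ht y z hy hz hyz
    have h1 : (∫ w in y..z, (c/2 : ℝ)) ≤ ∫ w in y..z, ρ t w := by
      apply intervalIntegral.integral_mono_on hyz intervalIntegrable_const
        ((hρtc t).intervalIntegrable y z)
      intro x hx
      exact hpos t ht x ⟨le_trans hy.1 hx.1, le_trans hx.2 hz.2⟩
    rw [intervalIntegral.integral_const, smul_eq_mul] at h1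
    linarith [h1]
  have hmono3 : ∀ t ∈ Icc (0:ℝ) T, ∀ y z, y ≤ z →
      c * (z - y) ≤ ∫ w in y..z, ρ t w := by
    intro t ht y z hyz
    have h1 : (∫ w in y..z, (c : ℝ)) ≤ ∫ w in y..z, ρ t w := by
      apply intervalIntegral.integral_mono_on hyz intervalIntegrable_const
        ((hρtc t).intervalIntegrable y z)
      intro x _
      exact hlow t x ht
    rw [intervalIntegral.integral_const, smul_eq_mul] at h1
    linarith [h1]
  -- existence of the implicit solution in the band
  have hex : ∀ t ∈ W, ∃ y, y ∈ Icc (-M) M ∧ G t y = g t := by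
    intro t ht
    have hG0 : G t 0 = 0 := intervalIntegral.integral_same
    have hGM : c/2 * M ≤ G t M := by
      have := hmono2 t ht 0 M ⟨by linarith, by linarith⟩ ⟨by linarith, le_refl _⟩ hM0.le
      rw [hGsub t 0 M, hG0] at this; linarith
    have hGmM : G t (-M) ≤ -(c/2 * M) := by
      have := hmono2 t ht (-M) 0 ⟨le_refl _, by linarith⟩ ⟨by linarith, by linarith⟩ (by linarith)
      rw [hGsub t (-M) 0, hG0] at this; linarith
    have hgt := hgb t (hWsub ht)
    have h1 : g t ∈ Icc (G t (-M)) (G t M) := by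
      constructor
      · have h2 := abs_le.mp hgt
        linarith [h2.1]
      · have h2 := abs_le.mp hgt
        linarith [h2.2]
    have := intermediate_value_Icc (by linarith : -M ≤ M) (hGc t).continuousOn h1
    obtain ⟨y, hy, hGy⟩ := this
    exact ⟨y, hy, hGy⟩
  choose! u huM huG using hex
  -- uniqueness within the band
  have huniq : ∀ t ∈ W, ∀ y ∈ Icc (-M) M, G t y = g t → y = u t := by
    intro t ht y hy hGy
    by_contra hne
    rcases lt_or_gt_of_ne hne with h | h
    · have := hmono2 t ht y (u t) hy (huM t ht) h.le
      rw [hGsub, hGy, huG t ht] at this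
      nlinarith
    · have := hmono2 t ht (u t) y (huM t ht) hy h.le
      rw [hGsub, hGy, huG t ht] at this
      nlinarith
  have h0W : (0:ℝ) ∈ W := ⟨by linarith, by linarith⟩
  have hu0 : u 0 = 0 := by
    symm
    apply huniq 0 h0W 0 ⟨by linarith, by linarith⟩
    simp [hGdef, hgdef]
  -- the core: derivative of u on the open window
  set O : Set ℝ := Ioo (-δ) (T + δ) with hOdef
  have hIccO : Icc (0:ℝ) T ⊆ O := fun x hx => ⟨by linarith [hx.1], by linarith [hx.2]⟩
  have hOopen : IsOpen O := isOpen_Ioo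
  have hasD : ∀ t₀ ∈ O, HasDerivAt u (-(Q t₀ (u t₀)) / ρ t₀ (u t₀)) t₀ := by
    intro t₀ ht₀
    have ht₀W : t₀ ∈ W := Ioo_subset_Icc_self ht₀
    set y₀ : ℝ := u t₀ with hy₀def
    set B : ℝ := ρ t₀ y₀ with hBdef
    set A : ℝ := Q t₀ y₀ with hAdef
    have hy₀ : y₀ ∈ Icc (-M) M := huM t₀ ht₀W
    have hB : c/2 ≤ B := hpos t₀ ht₀W y₀ hy₀
    have hB0 : 0 < B := by linarith
    set h : ℝ → ℝ := fun t => G t y₀ + ∫ s in (0:ℝ)..t, D s with hhdef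
    -- h is differentiable with derivative A at t₀
    have hh : HasDerivAt h A t₀ := by
      -- derivative of the flux integral
      have part2 : HasDerivAt (fun t => ∫ s in (0:ℝ)..t, D s) (D t₀) t₀ :=
        intervalIntegral.integral_hasDerivAt_right (hDc.intervalIntegrable _ _)
          (hDc.stronglyMeasurableAtFilter _ _) hDc.continuousAt
      -- derivative of the parametric integral
      obtain ⟨bd, hbd⟩ := ((isCompact_Icc (a := t₀ - 1) (b := t₀ + 1)).prod
        (isCompact_uIcc (a := (0:ℝ)) (b := y₀))).exists_bound_of_continuousOn hPc.continuousOn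
      have hbound : ∀ (w : ℝ), w ∈ Set.uIoc (0:ℝ) y₀ → ∀ t ∈ Metric.ball t₀ 1, ‖P t w‖ ≤ bd := by
        intro w hw t htb
        rw [Metric.mem_ball, Real.dist_eq] at htb
        have habs := abs_lt.mp htb
        exact hbd (t, w) ⟨⟨by linarith [habs.1], by linarith [habs.2]⟩,
          Set.uIoc_subset_uIcc hw⟩
      have part1 : HasDerivAt (fun t => G t y₀) (∫ w in (0:ℝ)..y₀, P t₀ w) t₀ :=
        (intervalIntegral.hasDerivAt_integral_of_dominated_loc_of_deriv_le
          (F := fun t w => ρ t w) (F' := P) (x₀ := t₀) (a := 0) (b := y₀)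
          (bound := fun _ => bd) (μ := MeasureTheory.volume) (Metric.ball_mem_nhds t₀ one_pos)
          (Filter.Eventually.of_forall fun t => (hρtc t).aestronglyMeasurable)
          ((hρtc t₀).intervalIntegrable 0 y₀)
          ((hPc.comp (continuous_const.prodMk continuous_id)).aestronglyMeasurable)
          (MeasureTheory.ae_of_all _ hbound) intervalIntegrable_const
          (MeasureTheory.ae_of_all _ fun w _ t _ => hP t w)).2
      -- identify the derivative of the parametric integral
      have hPeq : ∀ x : ℝ, P t₀ x = deriv (deriv (ρ t₀)) x := by
        intro x
        rw [← (hP t₀ x).deriv, heat t₀ x, iteratedDeriv_succ, iteratedDeriv_one]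
      have hs1 : ContDiff ℝ ∞ (ρ t₀) := (hρt_smooth t₀).of_le (by simp)
      have hs2 : ContDiff ℝ ∞ (deriv (ρ t₀)) := (contDiff_infty_iff_deriv.mp hs1).2
      have hs3 : Continuous (deriv (deriv (ρ t₀))) :=
        ((contDiff_infty_iff_deriv.mp hs2).2).continuous
      have hint : ∫ w in (0:ℝ)..y₀, P t₀ w = Q t₀ y₀ - Q t₀ 0 := by
        have heq : ∫ w in (0:ℝ)..y₀, P t₀ w = ∫ w in (0:ℝ)..y₀, deriv (deriv (ρ t₀)) w := by
          apply intervalIntegral.integral_congr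
          intro x _
          exact hPeq x
        rw [heq, intervalIntegral.integral_deriv_eq_sub
          (fun x _ => (hs2.differentiable (by norm_num)).differentiableAt)
          (hs3.intervalIntegrable 0 y₀), hQd, hQd]
      have hsum := part1.add part2
      have hAeq : (∫ w in (0:ℝ)..y₀, P t₀ w) + D t₀ = A := by
        rw [hint, hAdef, hDdef]
        simp only
        rw [hQd t₀ 0]
        ring
      rw [hAeq] at hsum
      exact hsum
    have hh0 : h t₀ = 0 := by
      have := huG t₀ ht₀W
      rw [hhdef]
      simp only [← hy₀def] at this ⊢
      rw [this, hgdef]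
      ring
    have hkey : ∀ t ∈ W, ∫ w in y₀..(u t), ρ t w = -(h t) := by
      intro t ht
      rw [hGsub, huG t ht, hhdef, hgdef]
      ring
    -- Lipschitz bound near t₀
    set K : ℝ := (|A| + 1) * (2 / c) with hKdef
    have hK0 : 0 < K := by positivity
    have hWnhds : W ∈ nhds t₀ := by
      rw [hWdef]
      exact Icc_mem_nhds (by linarith [ht₀.1]) (by linarith [ht₀.2])
    have hc2 : ∀ t ∈ W, c/2 * |u t - y₀| ≤ |h t| := by
      intro t ht
      rcases le_total y₀ (u t) with hle | hle
      · have h3 := hmono2 t ht y₀ (u t) hy₀ (huM t ht) hle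
        rw [hkey t ht] at h3
        rw [abs_of_nonneg (by linarith : (0:ℝ) ≤ u t - y₀)]
        calc c/2 * (u t - y₀) ≤ -(h t) := h3
          _ ≤ |h t| := neg_le_abs _
      · have h3 := hmono2 t ht (u t) y₀ (huM t ht) hy₀ hle
        have heq : ∫ w in (u t)..y₀, ρ t w = h t := by
          rw [intervalIntegral.integral_symm, hkey t ht]; ring
        rw [heq] at h3
        rw [abs_of_nonpos (by linarith : u t - y₀ ≤ 0)]
        calc c/2 * -(u t - y₀) = c/2 * (y₀ - u t) := by ring
          _ ≤ h t := h3
          _ ≤ |h t| := le_abs_self _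
    have hht : ∀ t, |h t - h t₀ - (t - t₀) • A| ≤ 1 * |t - t₀| →
        |h t| ≤ (|A| + 1) * |t - t₀| := by
      intro t hlit
      rw [hh0, sub_zero, smul_eq_mul, one_mul] at hlit
      have h2 : |(t - t₀) * A| = |A| * |t - t₀| := by
        rw [abs_mul, mul_comm]
      calc |h t| = |(h t - (t - t₀) * A) + (t - t₀) * A| := by congr 1; ring
        _ ≤ |h t - (t - t₀) * A| + |(t - t₀) * A| := abs_add_le _ _
        _ ≤ |t - t₀| + |A| * |t - t₀| := by rw [h2]; exact add_le_add hlit (le_refl _)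
        _ = (|A| + 1) * |t - t₀| := by ring
    have hlito := (hasDerivAt_iff_isLittleO.mp hh)
    have hLip : ∀ᶠ t in nhds t₀, |u t - y₀| ≤ K * |t - t₀| := by
      filter_upwards [hlito.def one_pos, hWnhds] with t h1t htW
      have h4 : |h t| ≤ (|A| + 1) * |t - t₀| := by
        apply hht t
        simpa [Real.norm_eq_abs] using h1t
      have h5 := le_trans (hc2 t htW) h4
      have h6 := mul_le_mul_of_nonneg_left h5 (by positivity : (0:ℝ) ≤ 2/c)
      calc |u t - y₀| = 2/c * (c/2 * |u t - y₀|) := by field_simp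
        _ ≤ 2/c * ((|A| + 1) * |t - t₀|) := h6
        _ = K * |t - t₀| := by rw [hKdef]; ring
    -- the derivative
    have hres : HasDerivAt u (-A / B) t₀ := by
      rw [hasDerivAt_iff_isLittleO, Asymptotics.isLittleO_iff]
      intro ε hε
      set η : ℝ := ε * B / (2 * K) with hηdef
      have hη0 : 0 < η := by positivity
      obtain ⟨r, hr0, hrball⟩ := Metric.continuousAt_iff.mp (hρc.continuousAt (x := (t₀, y₀))) η hη0
      have hball : Metric.ball t₀ (min r (r / K)) ∈ nhds t₀ :=
        Metric.ball_mem_nhds _ (by positivity)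
      filter_upwards [hlito.def (by positivity : (0:ℝ) < ε * B / 2), hWnhds, hLip, hball]
        with t hlit htW hLipt hballt
      rw [Metric.mem_ball, Real.dist_eq, lt_min_iff] at hballt
      -- bound on the nonlinear remainder
      set E : ℝ := ∫ w in y₀..(u t), (ρ t w - B) with hEdef
      have hEbound : |E| ≤ η * |u t - y₀| := by
        have hnorm : ∀ w ∈ Set.uIoc y₀ (u t), ‖ρ t w - B‖ ≤ η := by
          intro w hw
          have hw1 : |w - y₀| ≤ |u t - y₀| := by
            rw [Set.mem_uIoc] at hw
            rw [abs_le]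
            rcases hw with hw | hw
            · constructor
              · linarith [hw.1, neg_abs_le (u t - y₀), abs_nonneg (u t - y₀)]
              · linarith [hw.2, le_abs_self (u t - y₀), abs_nonneg (u t - y₀)]
            · constructor
              · linarith [hw.1, neg_abs_le (u t - y₀), abs_nonneg (u t - y₀)]
              · linarith [hw.2, le_abs_self (u t - y₀), abs_nonneg (u t - y₀)]
          have hdist : dist (t, w) (t₀, y₀) < r := by
            rw [Prod.dist_eq, Real.dist_eq, Real.dist_eq]
            apply max_lt hballt.1
            calc |w - y₀| ≤ |u t - y₀| := hw1
              _ ≤ K * |t - t₀| := hLipt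
              _ < K * (r / K) := by
                  apply mul_lt_mul_of_pos_left hballt.2 hK0
              _ = r := by field_simp
          have := hrball hdist
          rw [Real.dist_eq] at this
          simp only [Function.uncurry] at this
          rw [Real.norm_eq_abs]
          exact this.le
        have := intervalIntegral.norm_integral_le_of_norm_le_const hnorm
        simpa [Real.norm_eq_abs, hEdef, abs_sub_comm (u t) y₀] using this
      have hEK : |E| ≤ ε * B / 2 * |t - t₀| := by
        calc |E| ≤ η * |u t - y₀| := hEbound
          _ ≤ η * (K * |t - t₀|) := by
              apply mul_le_mul_of_nonneg_left hLipt hη0.le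
          _ = ε * B / 2 * |t - t₀| := by
              rw [hηdef]; field_simp
      -- the algebraic identity
      have hident : -(h t) = B * (u t - y₀) + E := by
        have h7 := hkey t htW
        have h8 : E = (∫ w in y₀..(u t), ρ t w) - (u t - y₀) * B := by
          rw [hEdef, intervalIntegral.integral_sub ((hρtc t).intervalIntegrable _ _)
            intervalIntegrable_const, intervalIntegral.integral_const, smul_eq_mul]
        rw [h8, h7]; ring
      have hexpand : u t - y₀ - (t - t₀) • (-A / B) =
          B⁻¹ * (-(h t - h t₀ - (t - t₀) • A) - E) := by
        rw [hh0, sub_zero, smul_eq_mul, smul_eq_mul]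
        have h9 : h t = -(B * (u t - y₀)) - E := by linarith [hident]
        rw [h9]
        field_simp
        ring
      rw [Real.norm_eq_abs, Real.norm_eq_abs, hexpand, abs_mul,
        abs_of_nonneg (inv_nonneg.mpr hB0.le)]
      have hlit' : |h t - h t₀ - (t - t₀) • A| ≤ ε * B / 2 * |t - t₀| := by
        simpa [Real.norm_eq_abs] using hlit
      have habs : |(-(h t - h t₀ - (t - t₀) • A) - E)| ≤
          |h t - h t₀ - (t - t₀) • A| + |E| := by
        calc |(-(h t - h t₀ - (t - t₀) • A) - E)| ≤
            |(-(h t - h t₀ - (t - t₀) • A))| + |E| := abs_sub _ _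
          _ = |h t - h t₀ - (t - t₀) • A| + |E| := by rw [abs_neg]
      calc B⁻¹ * |(-(h t - h t₀ - (t - t₀) • A) - E)|
          ≤ B⁻¹ * (ε * B / 2 * |t - t₀| + ε * B / 2 * |t - t₀|) := by
            apply mul_le_mul_of_nonneg_left _ (inv_nonneg.mpr hB0.le)
            exact le_trans habs (add_le_add hlit' hEK)
        _ = ε * |t - t₀| := by
            have harith : ∀ b z : ℝ, b ≠ 0 → b⁻¹ * (ε * b / 2 * z + ε * b / 2 * z) = ε * z := by
              intro b z hb; field_simp; ring
            exact harith B _ (ne_of_gt hB0)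
    exact hres
  -- continuity of u on O
  have hucont : ContinuousOn u O := fun t ht =>
    ((hasD t ht).continuousAt).continuousWithinAt
  -- the derivative function is continuous on O
  have hFcont : ContinuousOn (fun t => -(Q t (u t)) / ρ t (u t)) O := by
    apply ContinuousOn.div
    · exact ((hQc.comp_continuousOn (continuousOn_id.prodMk hucont))).neg
    · exact hρc.comp_continuousOn (continuousOn_id.prodMk hucont)
    · intro t ht
      have h1 := hpos t (Ioo_subset_Icc_self ht) (u t) (huM t (Ioo_subset_Icc_self ht))
      exact ne_of_gt (by linarith)
  -- ContDiffOn
  have hCD : ContDiffOn ℝ 1 u (Icc 0 T) := by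
    have hCD1 : ContDiffOn ℝ 1 u O := by
      rw [show (1 : WithTop ℕ∞) = 0 + 1 from rfl,
        contDiffOn_succ_iff_deriv_of_isOpen hOopen]
      refine ⟨fun t ht => (hasD t ht).differentiableAt.differentiableWithinAt, ?_, ?_⟩
      · intro h; simp at h
      · rw [contDiffOn_zero]
        apply ContinuousOn.congr hFcont
        intro t ht
        simpa using (hasD t ht).deriv
    exact hCD1.mono hIccO
  refine ⟨u, hu0, hCD, ?_, ?_, ?_⟩
  · intro t ht
    exact huG t (hIccW ht)
  · intro t ht
    have := hasD t (hIccO ht)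
    rwa [hQd t (u t)]
  · intro v hv t ht
    have hsm : StrictMono (G t) := by
      intro y z hyz
      have := hmono3 t ht y z hyz.le
      rw [hGsub] at this
      nlinarith
    apply hsm.injective
    show G t (v t) = G t (u t)
    rw [huG t (hIccW ht)]
    exact hv t ht
end

section
/- Let ρ₀ : ℝ → [0,1] be Lipschitz and let a ∈ ℝ, u > 0, t ≥ 0. Let ρ^N solve the semi-discrete heat equation with data ρ₀(·/N) and assume |ρ^N_t(x) − ρ(t,x/N)| ≤ C₀ t/N². Then (1/√N) ∑_{x=1}^{⌊a√N⌋−1} ρ^N_t(x + ⌊uN⌋) converges to a·ρ(t,u) as N → ∞. -/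
open Real Filter

/-- Riemann-sum limit: for Lipschitz `ρ₀ : ℝ → [0,1]`, `a > 0`, `u > 0`, `t ≥ 0`,
if `ρ^N` solves the semi-discrete heat equation with data `ρ₀(·/N)` and
`|ρ^N_t(x) - ρ(t,x/N)| ≤ C₀ t/N²`, then
`(1/√N) ∑_{x=1}^{⌊a√N⌋-1} ρ^N_t(x + ⌊uN⌋) → a ρ(t,u)` as `N → ∞`. -/
theorem stmt_17 (Kl : NNReal) (ρ₀ : ℝ → ℝ) (hlip : LipschitzWith Kl ρ₀)
    (hrange : ∀ x, ρ₀ x ∈ Set.Icc (0 : ℝ) 1)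
    (ρ : ℝ → ℝ → ℝ)
    (hinit : ∀ x, ρ 0 x = ρ₀ x)
    (hρrange : ∀ s x, 0 ≤ s → ρ s x ∈ Set.Icc (0 : ℝ) 1)
    (hρlip : ∀ s : ℝ, 0 ≤ s → LipschitzWith Kl (ρ s))
    (heat : ∀ s x, 0 < s → deriv (fun τ => ρ τ x) s = iteratedDeriv 2 (ρ s) x)
    (a u t : ℝ) (ha : 0 < a) (hu : 0 < u) (ht : 0 ≤ t)
    (ρN : ℕ → ℝ → ℤ → ℝ) (C₀ : ℝ)
    (hNinit : ∀ N : ℕ, 1 ≤ N → ∀ x : ℤ, ρN N 0 x = ρ₀ ((x : ℝ) / N))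
    (hNode : ∀ N : ℕ, 1 ≤ N → ∀ s x, HasDerivAt (fun τ => ρN N τ x)
      ((N : ℝ) ^ 2 * (ρN N s (x + 1) + ρN N s (x - 1) - 2 * ρN N s x)) s)
    (happrox : ∀ N : ℕ, 1 ≤ N → ∀ (s : ℝ) (x : ℤ), 0 ≤ s →
      |ρN N s x - ρ s ((x : ℝ) / N)| ≤ C₀ * s / (N : ℝ) ^ 2) :
    Tendsto (fun N : ℕ =>
        (1 / Real.sqrt N) *
          ∑ x ∈ Finset.Icc (1 : ℤ) (⌊a * Real.sqrt N⌋ - 1),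
            ρN N t (x + ⌊u * (N : ℝ)⌋))
      atTop (nhds (a * ρ t u)) := by
  have hKl : (0 : ℝ) ≤ Kl := Kl.coe_nonneg
  set c : ℝ := ρ t u with hc
  -- sqrt tends to atTop
  have hsq : Tendsto (fun N : ℕ => Real.sqrt N) atTop atTop := by
    have h := (tendsto_rpow_atTop (by norm_num : (0:ℝ) < 1/2)).comp
      (tendsto_natCast_atTop_atTop (R := ℝ))
    refine h.congr fun N => ?_
    simp [Function.comp, Real.rpow_natCast, Real.sqrt_eq_rpow]
  have hN2 : Tendsto (fun N : ℕ => ((N : ℝ)) ^ 2) atTop atTop :=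
    (tendsto_pow_atTop (two_ne_zero)).comp (tendsto_natCast_atTop_atTop (R := ℝ))
  -- C₀ * t ≥ 0
  have hC0t : 0 ≤ C₀ * t := by
    have h := happrox 1 le_rfl t 0 ht
    have := (abs_nonneg _).trans h
    simpa using this
  -- cardinality term
  set card : ℕ → ℝ := fun N => ((Finset.Icc (1 : ℤ) (⌊a * Real.sqrt N⌋ - 1)).card : ℝ)
    with hcard_def
  have hcard_eq : ∀ N : ℕ, card N = (((⌊a * Real.sqrt N⌋ - 1).toNat : ℤ) : ℝ) := by
    intro N
    simp [hcard_def, Int.card_Icc]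
  have hcard_le : ∀ N : ℕ, card N ≤ a * Real.sqrt N := by
    intro N
    rw [hcard_eq]
    rcases le_or_gt 0 (⌊a * Real.sqrt N⌋ - 1) with h | h
    · rw [Int.toNat_of_nonneg h]
      have h1 : ((⌊a * Real.sqrt N⌋ : ℤ) : ℝ) ≤ a * Real.sqrt N := Int.floor_le _
      push_cast
      linarith
    · rw [Int.toNat_of_nonpos h.le]
      push_cast
      positivity
  have hcard_ge : ∀ N : ℕ, a * Real.sqrt N - 2 ≤ card N := by
    intro N
    rw [hcard_eq]
    have h1 : a * Real.sqrt N - 1 ≤ ((⌊a * Real.sqrt N⌋ : ℤ) : ℝ) :=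
      (Int.sub_one_lt_floor _).le
    have h2 : ((⌊a * Real.sqrt N⌋ - 1 : ℤ) : ℝ) ≤ (((⌊a * Real.sqrt N⌋ - 1).toNat : ℤ) : ℝ) := by
      exact_mod_cast Int.self_le_toNat _
    push_cast at h1 h2 ⊢
    linarith
  -- card N / sqrt N → a
  have hcard_tendsto : Tendsto (fun N : ℕ => card N / Real.sqrt N) atTop (nhds a) := by
    have hl : Tendsto (fun N : ℕ => a - 2 / Real.sqrt N) atTop (nhds a) := by
      have h2 : Tendsto (fun N : ℕ => 2 / Real.sqrt N) atTop (nhds 0) :=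
        tendsto_const_nhds.div_atTop hsq
      simpa using (tendsto_const_nhds (x := a) (f := atTop (α := ℕ))).sub h2
    refine tendsto_of_tendsto_of_tendsto_of_le_of_le' hl tendsto_const_nhds ?_ ?_
    · filter_upwards [hsq.eventually_gt_atTop 0] with N hN
      rw [le_div_iff₀ hN]
      have h2 : 2 / Real.sqrt N * Real.sqrt N = 2 := by
        field_simp
      nlinarith [hcard_ge N, hN]
    · filter_upwards [hsq.eventually_gt_atTop 0] with N hN
      rw [div_le_iff₀ hN]
      exact hcard_le N
  -- decomposition
  have hdecomp : ∀ N : ℕ,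
      (1 / Real.sqrt N) * ∑ x ∈ Finset.Icc (1 : ℤ) (⌊a * Real.sqrt N⌋ - 1),
          ρN N t (x + ⌊u * (N : ℝ)⌋)
      = (1 / Real.sqrt N) * ∑ x ∈ Finset.Icc (1 : ℤ) (⌊a * Real.sqrt N⌋ - 1),
          (ρN N t (x + ⌊u * (N : ℝ)⌋) - c)
        + (card N / Real.sqrt N) * c := by
    intro N
    have : ∑ x ∈ Finset.Icc (1 : ℤ) (⌊a * Real.sqrt N⌋ - 1),
        (ρN N t (x + ⌊u * (N : ℝ)⌋) - c)
      = (∑ x ∈ Finset.Icc (1 : ℤ) (⌊a * Real.sqrt N⌋ - 1),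
          ρN N t (x + ⌊u * (N : ℝ)⌋)) - card N * c := by
      rw [Finset.sum_sub_distrib, Finset.sum_const, nsmul_eq_mul]
    rw [this]
    ring
  -- error term bound
  have herr : Tendsto (fun N : ℕ =>
      (1 / Real.sqrt N) * ∑ x ∈ Finset.Icc (1 : ℤ) (⌊a * Real.sqrt N⌋ - 1),
        (ρN N t (x + ⌊u * (N : ℝ)⌋) - c)) atTop (nhds 0) := by
    apply squeeze_zero_norm' (a := fun N : ℕ =>
      a * (C₀ * t / (N : ℝ) ^ 2 + (Kl : ℝ) * a / Real.sqrt N))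
    · filter_upwards [eventually_ge_atTop 1] with N hN
      have hN0 : (0 : ℝ) < N := by exact_mod_cast hN
      have hsN : (0 : ℝ) < Real.sqrt N := Real.sqrt_pos.2 hN0
      set B : ℝ := C₀ * t / (N : ℝ) ^ 2 + (Kl : ℝ) * a / Real.sqrt N with hB
      have hB0 : 0 ≤ B := by
        rw [hB]
        have h1 : 0 ≤ C₀ * t / (N : ℝ) ^ 2 := div_nonneg hC0t (by positivity)
        have h2 : 0 ≤ (Kl : ℝ) * a / Real.sqrt N := by positivity
        linarith
      -- pointwise bound
      have hterm : ∀ x ∈ Finset.Icc (1 : ℤ) (⌊a * Real.sqrt N⌋ - 1),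
          |ρN N t (x + ⌊u * (N : ℝ)⌋) - c| ≤ B := by
        intro x hx
        rw [Finset.mem_Icc] at hx
        set y : ℤ := x + ⌊u * (N : ℝ)⌋ with hy
        have h1 : |ρN N t y - ρ t ((y : ℝ) / N)| ≤ C₀ * t / (N : ℝ) ^ 2 :=
          happrox N hN t y ht
        have h2 : |ρ t ((y : ℝ) / N) - c| ≤ (Kl : ℝ) * |(y : ℝ) / N - u| := by
          have := (hρlip t ht).dist_le_mul ((y : ℝ) / N) u
          rwa [Real.dist_eq, Real.dist_eq] at this
        -- |y - u N| ≤ a sqrt N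
        have hx1 : (1 : ℝ) ≤ (x : ℝ) := by exact_mod_cast hx.1
        have hx2 : (x : ℝ) ≤ ((⌊a * Real.sqrt N⌋ : ℤ) : ℝ) - 1 := by
          have := hx.2
          have : (x : ℝ) ≤ ((⌊a * Real.sqrt N⌋ - 1 : ℤ) : ℝ) := by exact_mod_cast this
          push_cast at this
          linarith
        have hfl : ((⌊a * Real.sqrt N⌋ : ℤ) : ℝ) ≤ a * Real.sqrt N := Int.floor_le _
        have hfu1 : ((⌊u * (N : ℝ)⌋ : ℤ) : ℝ) ≤ u * N := Int.floor_le _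
        have hfu2 : u * (N : ℝ) - 1 ≤ ((⌊u * (N : ℝ)⌋ : ℤ) : ℝ) := (Int.sub_one_lt_floor _).le
        have hyr : ((y : ℤ) : ℝ) = (x : ℝ) + ((⌊u * (N : ℝ)⌋ : ℤ) : ℝ) := by
          push_cast [hy]; ring
        have habs : |((y : ℤ) : ℝ) - u * N| ≤ a * Real.sqrt N := by
          rw [abs_le]
          constructor
          · rw [hyr]; nlinarith
          · rw [hyr]; nlinarith
        have hdiv : |(y : ℝ) / N - u| ≤ a / Real.sqrt N := by
          have heq : (y : ℝ) / N - u = (((y : ℤ) : ℝ) - u * N) / N := by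
            field_simp
          rw [heq, abs_div, abs_of_pos hN0]
          rw [div_le_div_iff₀ hN0 hsN]
          have hNs : (N : ℝ) = Real.sqrt N * Real.sqrt N := (Real.mul_self_sqrt hN0.le).symm
          calc |((y : ℤ) : ℝ) - u * N| * Real.sqrt N ≤ (a * Real.sqrt N) * Real.sqrt N := by
                apply mul_le_mul_of_nonneg_right habs hsN.le
            _ = a * N := by rw [mul_assoc, ← hNs]
        calc |ρN N t y - c| ≤ |ρN N t y - ρ t ((y : ℝ) / N)| + |ρ t ((y : ℝ) / N) - c| := by
              have : ρN N t y - c = (ρN N t y - ρ t ((y : ℝ) / N)) + (ρ t ((y : ℝ) / N) - c) := by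
                ring
              rw [this]; exact abs_add_le _ _
          _ ≤ C₀ * t / (N : ℝ) ^ 2 + (Kl : ℝ) * |(y : ℝ) / N - u| := by
              gcongr
          _ ≤ C₀ * t / (N : ℝ) ^ 2 + (Kl : ℝ) * (a / Real.sqrt N) := by
              gcongr
          _ = B := by rw [hB]; ring
      have hsum : |∑ x ∈ Finset.Icc (1 : ℤ) (⌊a * Real.sqrt N⌋ - 1),
          (ρN N t (x + ⌊u * (N : ℝ)⌋) - c)| ≤ card N * B := by
        calc |∑ x ∈ Finset.Icc (1 : ℤ) (⌊a * Real.sqrt N⌋ - 1),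
              (ρN N t (x + ⌊u * (N : ℝ)⌋) - c)|
            ≤ ∑ x ∈ Finset.Icc (1 : ℤ) (⌊a * Real.sqrt N⌋ - 1),
              |ρN N t (x + ⌊u * (N : ℝ)⌋) - c| := Finset.abs_sum_le_sum_abs _ _
          _ ≤ (Finset.Icc (1 : ℤ) (⌊a * Real.sqrt N⌋ - 1)).card • B :=
              Finset.sum_le_card_nsmul _ _ _ hterm
          _ = card N * B := by rw [nsmul_eq_mul]
      rw [Real.norm_eq_abs, abs_mul, abs_of_pos (by positivity : (0:ℝ) < 1 / Real.sqrt N)]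
      calc (1 / Real.sqrt N) * |∑ x ∈ Finset.Icc (1 : ℤ) (⌊a * Real.sqrt N⌋ - 1),
            (ρN N t (x + ⌊u * (N : ℝ)⌋) - c)|
          ≤ (1 / Real.sqrt N) * (card N * B) := by
            apply mul_le_mul_of_nonneg_left hsum (by positivity)
        _ ≤ (1 / Real.sqrt N) * ((a * Real.sqrt N) * B) := by
            apply mul_le_mul_of_nonneg_left _ (by positivity)
            exact mul_le_mul_of_nonneg_right (hcard_le N) hB0
        _ = a * B := by field_simp
    · have h1 : Tendsto (fun N : ℕ => C₀ * t / (N : ℝ) ^ 2) atTop (nhds 0) :=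
        tendsto_const_nhds.div_atTop hN2
      have h2 : Tendsto (fun N : ℕ => (Kl : ℝ) * a / Real.sqrt N) atTop (nhds 0) :=
        tendsto_const_nhds.div_atTop hsq
      have := ((h1.add h2).const_mul a)
      simpa using this
  have hmain : Tendsto (fun N : ℕ =>
      (1 / Real.sqrt N) * ∑ x ∈ Finset.Icc (1 : ℤ) (⌊a * Real.sqrt N⌋ - 1),
          (ρN N t (x + ⌊u * (N : ℝ)⌋) - c)
        + (card N / Real.sqrt N) * c) atTop (nhds (a * c)) := by
    have := herr.add (hcard_tendsto.mul_const c)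
    simpa using this
  refine hmain.congr fun N => (hdecomp N).symm
end
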